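/- arXiv:1904.11004 — 5 statements merged into one kernel-verified Lean document; each statement's English description precedes it below -/
import Mathlib

section
/- Let 1 ≤ n ≤ d be integers, μ a Radon measure on ℝ^d, and B a ball intersecting supp μ. Then β_{μ,2}(B) ≤ α_{μ,2}(B). -/
open MeasureTheory Metric Set

noncomputable section

abbrev Euc (d : ℕ) : Type := EuclideanSpace ℝ (Fin d)

/-- An affine `n`-plane: a nonempty affine subspace whose direction has dimension `n`. -/
def IsAffinePlane {d : ℕ} (n : ℕ) (L : AffineSubspace ℝ (Euc d)) : Prop :=
  (L : Set (Euc d)).Nonempty ∧ Module.finrank ℝ L.direction = n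

/-- The support of a measure. -/
def measureSupport {d : ℕ} (μ : Measure (Euc d)) : Set (Euc d) :=
  { x | ∀ r > 0, 0 < μ (ball x r) }

/-- The quantity inside the infimum defining `β_{μ,p}(x,r)`, for a given plane `L`. -/
noncomputable def betaVal {d : ℕ} (p : ℝ) (μ : Measure (Euc d)) (x : Euc d) (r : ℝ)
    (L : AffineSubspace ℝ (Euc d)) : ℝ :=
  ((μ (ball x (3 * r))).toReal⁻¹ *
    ∫ y in ball x r, (Metric.infDist y (L : Set (Euc d)) / r) ^ p ∂μ) ^ (1 / p)

/-- The coefficient `β_{μ,p}(x,r)`: the infimum is over affine `n`-planes meeting `B(x,r)`. -/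
noncomputable def betaCoef {d : ℕ} (n : ℕ) (p : ℝ) (μ : Measure (Euc d)) (x : Euc d)
    (r : ℝ) : ℝ :=
  sInf { b | ∃ L : AffineSubspace ℝ (Euc d), IsAffinePlane n L ∧
    ((L : Set (Euc d)) ∩ ball x r).Nonempty ∧ b = betaVal p μ x r L }

/-- `Lip₁(B)`: 1-Lipschitz functions supported inside `B`. -/
def Lip1 {d : ℕ} (B : Set (Euc d)) : Set (Euc d → ℝ) :=
  { φ | LipschitzWith 1 φ ∧ tsupport φ ⊆ B }

/-- `F_B(μ,ν) = sup { |∫φ dμ − ∫φ dν| : φ ∈ Lip₁(B) }`. -/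
noncomputable def Fdist {d : ℕ} (B : Set (Euc d)) (μ ν : Measure (Euc d)) : ℝ :=
  sSup { t | ∃ φ ∈ Lip1 B, t = |(∫ x, φ x ∂μ) - ∫ x, φ x ∂ν| }

/-- The flat measure `c · H^n|_L`. -/
noncomputable def flatMeasure {d : ℕ} (n : ℕ) (c : ℝ) (L : AffineSubspace ℝ (Euc d)) :
    Measure (Euc d) :=
  ENNReal.ofReal c • (μH[(n : ℝ)]).restrict (L : Set (Euc d))

/-- The quantity inside the infimum defining `α_μ(x,r)`, for a given `c ≥ 0` and plane `L`. -/
noncomputable def alphaVal {d : ℕ} (n : ℕ) (μ : Measure (Euc d)) (x : Euc d) (r : ℝ)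
    (c : ℝ) (L : AffineSubspace ℝ (Euc d)) : ℝ :=
  Fdist (ball x r) μ (flatMeasure n c L) / (r * (μ (ball x (3 * r))).toReal)

/-- The coefficient `α_μ(x,r)`. -/
noncomputable def alphaCoef {d : ℕ} (n : ℕ) (μ : Measure (Euc d)) (x : Euc d) (r : ℝ) : ℝ :=
  sInf { a | ∃ c : ℝ, 0 ≤ c ∧ ∃ L : AffineSubspace ℝ (Euc d), IsAffinePlane n L ∧
    a = alphaVal n μ x r c L }

/-- The Wasserstein distance `W_p(σ,ν)`: infimum of `(∫ |x−y|^p dπ)^{1/p}` over all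
transport plans `π` with marginals `σ` and `ν`. -/
noncomputable def Wasserstein {d : ℕ} (p : ℝ) (σ ν : Measure (Euc d)) : ℝ :=
  sInf { w | ∃ π : Measure (Euc d × Euc d),
    π.map Prod.fst = σ ∧ π.map Prod.snd = ν ∧
    w = (∫ z, dist z.1 z.2 ^ p ∂π) ^ (1 / p) }

/-- The properties of the fixed radial bump function `φ` used in the definition of
`α_{μ,p}`. -/
def IsBumpFn {d : ℕ} (φ : Euc d → ℝ) : Prop :=
  (∃ g : ℝ → ℝ, ∀ x, φ x = g ‖x‖) ∧
  (∃ K : NNReal, LipschitzWith K φ) ∧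
  (∀ x, φ x ∈ Icc (0 : ℝ) 1) ∧
  (∀ x ∈ ball (0 : Euc d) 2, φ x = 1) ∧
  Function.support φ ⊆ ball (0 : Euc d) 3 ∧
  ∃ c > (0 : ℝ), ∀ x ∈ ball (0 : Euc d) 3,
    c⁻¹ * Metric.infDist x (sphere (0 : Euc d) 3) ^ 2 ≤ φ x ∧
    φ x ≤ c * Metric.infDist x (sphere (0 : Euc d) 3) ^ 2 ∧
    ‖fderiv ℝ φ x‖ ≤ c * Metric.infDist x (sphere (0 : Euc d) 3)

/-- `φ_B(y) = φ((y − x)/r)` for `B = B(x,r)`. -/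
noncomputable def phiB {d : ℕ} (φ : Euc d → ℝ) (x : Euc d) (r : ℝ) (y : Euc d) : ℝ :=
  φ (r⁻¹ • (y - x))

/-- The quantity inside the infimum defining `α_{μ,p}(x,r)`, for a given plane `L`:
`(1/(r μ(3B)^{1/p})) W_p(φ_B μ, a_{B,L} φ_B H^n|_L)`. -/
noncomputable def alphaPVal {d : ℕ} (n : ℕ) (p : ℝ) (φ : Euc d → ℝ) (μ : Measure (Euc d))
    (x : Euc d) (r : ℝ) (L : AffineSubspace ℝ (Euc d)) : ℝ :=
  (r * (μ (ball x (3 * r))).toReal ^ (1 / p))⁻¹ *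
    Wasserstein p
      (μ.withDensity fun y => ENNReal.ofReal (phiB φ x r y))
      (((μH[(n : ℝ)]).restrict (L : Set (Euc d))).withDensity fun y =>
        ENNReal.ofReal
          (((∫ z, phiB φ x r z ∂μ) /
              ∫ z, phiB φ x r z ∂((μH[(n : ℝ)]).restrict (L : Set (Euc d)))) *
            phiB φ x r y))

/-- The coefficient `α_{μ,p}(x,r)`: infimum over affine `n`-planes meeting `B(x,r)`. -/
noncomputable def alphaP {d : ℕ} (n : ℕ) (p : ℝ) (φ : Euc d → ℝ) (μ : Measure (Euc d))
    (x : Euc d) (r : ℝ) : ℝ :=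
  sInf { a | ∃ L : AffineSubspace ℝ (Euc d), IsAffinePlane n L ∧
    ((L : Set (Euc d)) ∩ ball x r).Nonempty ∧ a = alphaPVal n p φ μ x r L }

/-!
Fix a plane `L` meeting `B` and a coupling `π` of `φ_B μ` with `a_{B,L} φ_B H^n|_L`. The second
marginal lives on `L`, so `dist(y, L) ≤ |y - z|` for `π`-a.e. `(y, z)`, and since `φ_B = 1` on `B`,
`∫_B dist(y, L)^p dμ ≤ ∫ dist(y, L)^p φ_B dμ ≤ ∫ |y - z|^p dπ`. Taking the infimum over couplings
gives `β_{μ,p}(B) ≤ α_{μ,p}(B)` plane by plane, for every `p > 0`. Couplings exist because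
`a_{B,L}` equalises the two masses; this needs `0 < H^n(L ∩ B) < ∞`, which an isometry
`ℝⁿ ≃ L` reduces to Haar measure on `ℝⁿ`.
-/
namespace AffineSubspace

variable {E : Type*} [NormedAddCommGroup E] [InnerProductSpace ℝ E] [FiniteDimensional ℝ E]

theorem exists_isometry_range_eq (L : AffineSubspace ℝ E) {q : E} (hq : q ∈ L) :
    ∃ f : EuclideanSpace ℝ (Fin (Module.finrank ℝ L.direction)) → E,
      Isometry f ∧ range f = L ∧ f 0 = q := by
  have : Nonempty L := ⟨⟨q, hq⟩⟩
  let e := (stdOrthonormalBasis ℝ L.direction).repr.symm.toIsometryEquiv.trans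
    (IsometryEquiv.vaddConst (⟨q, hq⟩ : L))
  refine ⟨Subtype.val ∘ e, isometry_subtype_coe.comp e.isometry, ?_, ?_⟩
  · rw [range_comp, e.range_eq_univ, image_univ, Subtype.range_coe]
  · simp [e]

variable [MeasurableSpace E] [BorelSpace E]

theorem hausdorffMeasure_inter_ball (L : AffineSubspace ℝ E) {q : E} (hq : q ∈ L) (ρ : ℝ) :
    μH[Module.finrank ℝ L.direction] ((L : Set E) ∩ ball q ρ) =
      μH[Module.finrank ℝ L.direction]
        (ball (0 : EuclideanSpace ℝ (Fin (Module.finrank ℝ L.direction))) ρ) := by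
  obtain ⟨f, hf, hrange, hf0⟩ := L.exists_isometry_range_eq hq
  rw [← hrange, inter_comm, ← image_preimage_eq_inter_range, ← hf0, hf.preimage_ball,
    hf.hausdorffMeasure_image (Or.inl (Nat.cast_nonneg _))]

theorem hausdorffMeasure_inter_ball_pos (L : AffineSubspace ℝ E) {q : E} (hq : q ∈ L) {ρ : ℝ}
    (hρ : 0 < ρ) : 0 < μH[Module.finrank ℝ L.direction] ((L : Set E) ∩ ball q ρ) := by
  rw [L.hausdorffMeasure_inter_ball hq]
  exact measure_ball_pos _ _ hρ

theorem hausdorffMeasure_inter_ball_lt_top (L : AffineSubspace ℝ E) {q : E} (hq : q ∈ L)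
    (ρ : ℝ) : μH[Module.finrank ℝ L.direction] ((L : Set E) ∩ ball q ρ) < ⊤ := by
  rw [L.hausdorffMeasure_inter_ball hq]
  exact measure_ball_lt_top

theorem restrict_hausdorffMeasure_ball_lt_top (L : AffineSubspace ℝ E) {q : E} (hq : q ∈ L)
    (y : E) (R : ℝ) : (μH[Module.finrank ℝ L.direction]).restrict L (ball y R) < ⊤ := by
  rw [Measure.restrict_apply measurableSet_ball, inter_comm]
  exact (measure_mono (inter_subset_inter_right _ (ball_subset_ball' le_rfl))).trans_lt
    (L.hausdorffMeasure_inter_ball_lt_top hq (R + dist y q))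

end AffineSubspace

theorem inv_smul_sub_mem_ball_zero_iff {E : Type*} [NormedAddCommGroup E] [NormedSpace ℝ E]
    {x y : E} {r k : ℝ} (hr : 0 < r) : r⁻¹ • (y - x) ∈ ball (0 : E) k ↔ y ∈ ball x (k * r) := by
  simp [mem_ball, dist_eq_norm, norm_smul, abs_of_pos hr, inv_mul_lt_iff₀ hr, mul_comm]

section BumpFunction

variable {d : ℕ} {φ : Euc d → ℝ} {x : Euc d} {r : ℝ}

theorem phiB_nonneg (hφ : IsBumpFn φ) (y : Euc d) : 0 ≤ phiB φ x r y :=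
  (hφ.2.2.1 _).1

theorem continuous_phiB (hφ : IsBumpFn φ) : Continuous (phiB φ x r) := by
  obtain ⟨K, hK⟩ := hφ.2.1
  exact hK.continuous.comp (by fun_prop)

theorem phiB_eq_one (hφ : IsBumpFn φ) (hr : 0 < r) {y : Euc d} (hy : y ∈ ball x (2 * r)) :
    phiB φ x r y = 1 :=
  hφ.2.2.2.1 _ ((inv_smul_sub_mem_ball_zero_iff hr).2 hy)

theorem support_phiB_subset (hφ : IsBumpFn φ) (hr : 0 < r) :
    Function.support (phiB φ x r) ⊆ ball x (3 * r) := fun _ hy =>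
  (inv_smul_sub_mem_ball_zero_iff hr).1 (hφ.2.2.2.2.1 hy)

theorem integrable_phiB (hφ : IsBumpFn φ) (hr : 0 < r) {ν : Measure (Euc d)}
    (hν : ν (ball x (3 * r)) ≠ ⊤) : Integrable (phiB φ x r) ν := by
  refine (integrableOn_iff_integrable_of_support_subset (support_phiB_subset hφ hr)).1 ?_
  refine Measure.integrableOn_of_bounded (M := 1) hν
    (continuous_phiB hφ).aestronglyMeasurable (ae_of_all _ fun y => ?_)
  rw [Real.norm_of_nonneg (phiB_nonneg hφ y)]
  exact (hφ.2.2.1 _).2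

theorem integral_phiB_restrict_hausdorffMeasure_pos (hφ : IsBumpFn φ)
    {L : AffineSubspace ℝ (Euc d)} {q : Euc d} (hq : q ∈ L) (hqB : q ∈ ball x r) :
    0 < ∫ z, phiB φ x r z ∂(μH[Module.finrank ℝ L.direction]).restrict L := by
  have hr : 0 < r := pos_of_mem_ball hqB
  rw [integral_pos_iff_support_of_nonneg (phiB_nonneg hφ)
    (integrable_phiB hφ hr (L.restrict_hausdorffMeasure_ball_lt_top hq _ _).ne)]
  have hsub : (L : Set (Euc d)) ∩ ball q (r - dist q x) ⊆ Function.support (phiB φ x r) ∩ L :=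
    fun y hy => ⟨by
      rw [Function.mem_support, phiB_eq_one hφ hr (ball_subset_ball' (by linarith) hy.2)]
      exact one_ne_zero, hy.1⟩
  exact (L.hausdorffMeasure_inter_ball_pos hq (sub_pos.2 (mem_ball.1 hqB))).trans_le
    ((measure_mono hsub).trans (Measure.le_restrict_apply _ _))

end BumpFunction

theorem exists_map_fst_map_snd_eq {α β : Type*} [MeasurableSpace α] [MeasurableSpace β]
    {σ : Measure α} {ν : Measure β} [IsFiniteMeasure σ] [IsFiniteMeasure ν]
    (h : σ univ = ν univ) : ∃ π : Measure (α × β), π.map Prod.fst = σ ∧ π.map Prod.snd = ν := by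
  by_cases h0 : σ univ = 0
  · have hσ : σ = 0 := Measure.measure_univ_eq_zero.1 h0
    have hν : ν = 0 := Measure.measure_univ_eq_zero.1 (h ▸ h0)
    exact ⟨0, by simp [hσ], by simp [hν]⟩
  · refine ⟨(σ univ)⁻¹ • σ.prod ν, ?_, ?_⟩
    · rw [Measure.map_smul, Measure.map_fst_prod, ← h, smul_smul,
        ENNReal.inv_mul_cancel h0 (measure_ne_top σ univ), one_smul]
    · rw [Measure.map_smul, Measure.map_snd_prod, smul_smul,
        ENNReal.inv_mul_cancel h0 (measure_ne_top σ univ), one_smul]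

theorem lintegral_infDist_le_of_map_eq {α : Type*} [PseudoMetricSpace α] [MeasurableSpace α]
    [OpensMeasurableSpace α] {σ ν : Measure α} {π : Measure (α × α)}
    (h₁ : π.map Prod.fst = σ) (h₂ : π.map Prod.snd = ν) {s : Set α} (hs : ∀ᵐ y ∂ν, y ∈ s)
    {g : ℝ → ℝ} (hg : MonotoneOn g (Ici 0)) (hgm : Measurable g) :
    ∫⁻ y, ENNReal.ofReal (g (infDist y s)) ∂σ ≤
      ∫⁻ z, ENNReal.ofReal (g (dist z.1 z.2)) ∂π := by
  have hm : Measurable fun y => ENNReal.ofReal (g (infDist y s)) :=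
    ENNReal.measurable_ofReal.comp (hgm.comp (continuous_infDist_pt s).measurable)
  rw [← h₁, lintegral_map hm measurable_fst]
  refine lintegral_mono_ae ?_
  filter_upwards [ae_of_ae_map measurable_snd.aemeasurable (h₂ ▸ hs)] with z hz
  exact ENNReal.ofReal_le_ofReal
    (hg infDist_nonneg dist_nonneg (infDist_le_dist_of_mem hz))

theorem withDensity_univ_eq_of_integral_ratio {α : Type*} [MeasurableSpace α]
    {μ ν : Measure α} {f : α → ℝ} (hf : 0 ≤ f) (hμ : Integrable f μ) (hν : Integrable f ν)
    (hpos : 0 < ∫ z, f z ∂ν) :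
    (ν.withDensity fun y => ENNReal.ofReal ((∫ z, f z ∂μ) / (∫ z, f z ∂ν) * f y)) univ =
      (μ.withDensity fun y => ENNReal.ofReal (f y)) univ := by
  have hc : 0 ≤ (∫ z, f z ∂μ) / ∫ z, f z ∂ν := div_nonneg (integral_nonneg hf) hpos.le
  simp only [withDensity_apply _ MeasurableSet.univ, Measure.restrict_univ,
    ENNReal.ofReal_mul hc]
  rw [lintegral_const_mul' _ _ ENNReal.ofReal_ne_top,
    ← ofReal_integral_eq_lintegral_ofReal hν (ae_of_all _ hf),
    ← ofReal_integral_eq_lintegral_ofReal hμ (ae_of_all _ hf), ← ENNReal.ofReal_mul hc,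
    div_mul_cancel₀ _ hpos.ne']

theorem rpow_inv_mul_le_of_le_div {p r T J I : ℝ} (hp : 0 < p) (hr : 0 < r) (hT : 0 < T)
    (hJ : 0 ≤ J) (h : J ≤ I / r ^ p) :
    r * T ^ (1 / p) * (T⁻¹ * J) ^ (1 / p) ≤ I ^ (1 / p) := by
  have hrp : 0 < r ^ p := Real.rpow_pos_of_pos hr p
  have hI : 0 ≤ I := by have := hJ.trans h; rwa [le_div_iff₀ hrp, zero_mul] at this
  have hTp : 0 < T ^ (1 / p) := Real.rpow_pos_of_pos hT _
  calc r * T ^ (1 / p) * (T⁻¹ * J) ^ (1 / p) = r * J ^ (1 / p) := by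
        rw [Real.mul_rpow (inv_nonneg.2 hT.le) hJ, Real.inv_rpow hT.le]
        field_simp
    _ ≤ r * (I / r ^ p) ^ (1 / p) := by gcongr
    _ = I ^ (1 / p) := by
        rw [Real.div_rpow hI hrp.le, one_div, Real.rpow_rpow_inv hr.le hp.ne']
        field_simp

theorem integrable_dist_div_rpow_of_ae_mem_ball {d : ℕ} {p r R : ℝ} (hp : 0 ≤ p) (hr : 0 < r)
    {x : Euc d} {π : Measure (Euc d × Euc d)} [IsFiniteMeasure π]
    (h : ∀ᵐ z ∂π, z.1 ∈ ball x R ∧ z.2 ∈ ball x R) :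
    Integrable (fun z : Euc d × Euc d => (dist z.1 z.2 / r) ^ p) π := by
  refine Integrable.of_bound (by fun_prop) ((2 * R / r) ^ p) ?_
  filter_upwards [h] with z ⟨hz₁, hz₂⟩
  rw [Real.norm_of_nonneg (Real.rpow_nonneg (div_nonneg dist_nonneg hr.le) _)]
  refine Real.rpow_le_rpow (div_nonneg dist_nonneg hr.le) (div_le_div_of_nonneg_right ?_ hr.le) hp
  linarith [dist_triangle_right z.1 z.2 x, mem_ball.1 hz₁, mem_ball.1 hz₂]

section Coefficients

variable {d n : ℕ} {p : ℝ} {φ : Euc d → ℝ} {μ : Measure (Euc d)} {x : Euc d} {r : ℝ}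

theorem betaVal_nonneg (hr : 0 ≤ r) (L : AffineSubspace ℝ (Euc d)) : 0 ≤ betaVal p μ x r L :=
  Real.rpow_nonneg (mul_nonneg (inv_nonneg.2 ENNReal.toReal_nonneg)
    (integral_nonneg fun _ => Real.rpow_nonneg (div_nonneg infDist_nonneg hr) _)) _

theorem wasserstein_nonneg (σ ν : Measure (Euc d)) : 0 ≤ Wasserstein p σ ν :=
  Real.sInf_nonneg fun _ ⟨_, _, _, hw⟩ =>
    hw ▸ Real.rpow_nonneg (integral_nonneg fun _ => Real.rpow_nonneg dist_nonneg _) _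

theorem alphaPVal_nonneg (hr : 0 ≤ r) (L : AffineSubspace ℝ (Euc d)) :
    0 ≤ alphaPVal n p φ μ x r L :=
  mul_nonneg (inv_nonneg.2 (mul_nonneg hr (Real.rpow_nonneg ENNReal.toReal_nonneg _)))
    (wasserstein_nonneg _ _)

theorem setIntegral_infDist_rpow_le_integral_dist_rpow (hp : 0 ≤ p) (hφ : IsBumpFn φ)
    (hr : 0 < r) (hμ : μ (ball x (3 * r)) ≠ ⊤) {L : Set (Euc d)} {ν : Measure (Euc d)}
    (hν : ∀ᵐ y ∂ν, y ∈ L ∩ ball x (3 * r)) {π : Measure (Euc d × Euc d)}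
    (h₁ : π.map Prod.fst = μ.withDensity fun y => ENNReal.ofReal (phiB φ x r y))
    (h₂ : π.map Prod.snd = ν) :
    ∫ y in ball x r, (infDist y L / r) ^ p ∂μ ≤ ∫ z, (dist z.1 z.2 / r) ^ p ∂π := by
  set σ := μ.withDensity fun y => ENNReal.ofReal (phiB φ x r y)
  have hφm : Measurable fun y => ENNReal.ofReal (phiB φ x r y) :=
    ENNReal.measurable_ofReal.comp (continuous_phiB hφ).measurable
  have hσ : ∀ᵐ y ∂σ, y ∈ ball x (3 * r) :=
    (ae_withDensity_iff hφm).2 (ae_of_all _ fun y hy =>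
      support_phiB_subset hφ hr fun h0 => hy (by simp [h0]))
  have : IsFiniteMeasure σ := isFiniteMeasure_withDensity_ofReal (integrable_phiB hφ hr hμ).2
  have : IsFiniteMeasure π :=
    (Measure.isFiniteMeasure_map_iff measurable_fst.aemeasurable).1 (h₁ ▸ inferInstance)
  have hπ : ∀ᵐ z ∂π, z.1 ∈ ball x (3 * r) ∧ z.2 ∈ L ∩ ball x (3 * r) :=
    (ae_of_ae_map measurable_fst.aemeasurable (h₁ ▸ hσ)).and
      (ae_of_ae_map measurable_snd.aemeasurable (h₂ ▸ hν))
  have hg : MonotoneOn (fun t : ℝ => (t / r) ^ p) (Ici 0) := fun a ha b _ hab =>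
    Real.rpow_le_rpow (div_nonneg ha hr.le) (by gcongr) hp
  have hgm : Measurable fun t : ℝ => (t / r) ^ p := by fun_prop
  have hgL : Measurable fun y => (infDist y L / r) ^ p :=
    hgm.comp (continuous_infDist_pt L).measurable
  -- Integrability keeps the Bochner integral `∫ (dist / r) ^ p ∂π` from being the junk `0`.
  have hint : Integrable (fun z : Euc d × Euc d => (dist z.1 z.2 / r) ^ p) π :=
    integrable_dist_div_rpow_of_ae_mem_ball hp hr (hπ.mono fun _ h => ⟨h.1, h.2.2⟩)
  have hlin : ∫⁻ y in ball x r, ENNReal.ofReal ((infDist y L / r) ^ p) ∂μ ≤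
      ∫⁻ z, ENNReal.ofReal ((dist z.1 z.2 / r) ^ p) ∂π :=
    calc ∫⁻ y in ball x r, ENNReal.ofReal ((infDist y L / r) ^ p) ∂μ
        = ∫⁻ y in ball x r, ENNReal.ofReal ((infDist y L / r) ^ p) ∂σ := by
          rw [setLIntegral_withDensity_eq_setLIntegral_mul _ hφm hgL.ennreal_ofReal
            measurableSet_ball]
          refine setLIntegral_congr_fun measurableSet_ball fun y hy => ?_
          simp [phiB_eq_one hφ hr (ball_subset_ball (by linarith) hy)]
      _ ≤ ∫⁻ y, ENNReal.ofReal ((infDist y L / r) ^ p) ∂σ := setLIntegral_le_lintegral _ _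
      _ ≤ ∫⁻ z, ENNReal.ofReal ((dist z.1 z.2 / r) ^ p) ∂π :=
          lintegral_infDist_le_of_map_eq h₁ h₂ (hν.mono fun _ h => h.1) hg hgm
  rw [integral_eq_lintegral_of_nonneg_ae (ae_of_all _ fun y => Real.rpow_nonneg
      (div_nonneg infDist_nonneg hr.le) _) hgL.aestronglyMeasurable,
    integral_eq_lintegral_of_nonneg_ae (ae_of_all _ fun z => Real.rpow_nonneg
      (div_nonneg dist_nonneg hr.le) _) hint.1]
  exact ENNReal.toReal_mono hint.lintegral_lt_top.ne hlin

end Coefficients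

theorem betaVal_le_alphaPVal {d n : ℕ} {p : ℝ} (hp : 0 < p) {φ : Euc d → ℝ} (hφ : IsBumpFn φ)
    (μ : Measure (Euc d)) {x : Euc d} {r : ℝ} {L : AffineSubspace ℝ (Euc d)}
    (hL : IsAffinePlane n L) (hLB : ((L : Set (Euc d)) ∩ ball x r).Nonempty) :
    betaVal p μ x r L ≤ alphaPVal n p φ μ x r L := by
  obtain ⟨-, rfl⟩ := hL
  obtain ⟨q, hqL, hqB⟩ := hLB
  have hr : 0 < r := pos_of_mem_ball hqB
  -- `μ(3B)` enters through `toReal`, so this case also covers `μ(3B) = ∞`: then `betaVal = 0`.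
  rcases ENNReal.toReal_nonneg.eq_or_lt' with hT | hT
  · rw [betaVal, hT, inv_zero, zero_mul, Real.zero_rpow (one_div_pos.2 hp).ne']
    exact alphaPVal_nonneg hr.le L
  have hμ : μ (ball x (3 * r)) ≠ ⊤ := (ENNReal.toReal_pos_iff.1 hT).2.ne
  set HL := (μH[Module.finrank ℝ L.direction]).restrict (L : Set (Euc d))
  have hHL : HL (ball x (3 * r)) ≠ ⊤ := (L.restrict_hausdorffMeasure_ball_lt_top hqL _ _).ne
  have hmass := withDensity_univ_eq_of_integral_ratio (phiB_nonneg hφ)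
    (integrable_phiB hφ hr hμ) (integrable_phiB hφ hr hHL)
    (integral_phiB_restrict_hausdorffMeasure_pos hφ hqL hqB)
  set σ := μ.withDensity fun y => ENNReal.ofReal (phiB φ x r y)
  set ν := HL.withDensity fun y => ENNReal.ofReal
    ((∫ z, phiB φ x r z ∂μ) / (∫ z, phiB φ x r z ∂HL) * phiB φ x r y)
  have : IsFiniteMeasure σ := isFiniteMeasure_withDensity_ofReal (integrable_phiB hφ hr hμ).2
  have : IsFiniteMeasure ν := ⟨hmass ▸ measure_lt_top σ univ⟩
  have hν : ∀ᵐ y ∂ν, y ∈ (L : Set (Euc d)) ∩ ball x (3 * r) := by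
    refine (ae_withDensity_iff
      (measurable_const.mul (continuous_phiB hφ).measurable).ennreal_ofReal).2 ?_
    filter_upwards [ae_restrict_mem L.closed_of_finiteDimensional.measurableSet] with y hyL hy
    exact ⟨hyL, support_phiB_subset hφ hr fun h0 => hy (by simp [h0])⟩
  -- Without a coupling, `Wasserstein` would be `sInf ∅ = 0`.
  obtain ⟨π₀, hπ₀⟩ := exists_map_fst_map_snd_eq hmass.symm
  rw [betaVal, alphaPVal, Wasserstein, le_inv_mul_iff₀ (by positivity)]
  refine le_csInf ⟨_, π₀, hπ₀.1, hπ₀.2, rfl⟩ ?_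
  rintro _ ⟨π, h₁, h₂, rfl⟩
  refine rpow_inv_mul_le_of_le_div hp hr hT (setIntegral_nonneg measurableSet_ball fun y _ =>
    Real.rpow_nonneg (div_nonneg infDist_nonneg hr.le) _) ?_
  have hdiv : ∀ z : Euc d × Euc d, (dist z.1 z.2 / r) ^ p = dist z.1 z.2 ^ p / r ^ p :=
    fun z => Real.div_rpow dist_nonneg hr.le p
  rw [← integral_div, ← funext hdiv]
  exact setIntegral_infDist_rpow_le_integral_dist_rpow hp.le hφ hr hμ hν h₁ h₂

theorem statement4_general (n d : ℕ)
    (φ : Euc d → ℝ) (hφ : IsBumpFn φ)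
    (μ : Measure (Euc d))
    (x : Euc d) (r : ℝ) :
    betaCoef n 2 μ x r ≤ alphaP n 2 φ μ x r := by
  by_cases h : ∃ L : AffineSubspace ℝ (Euc d), IsAffinePlane n L ∧
      ((L : Set (Euc d)) ∩ ball x r).Nonempty
  · obtain ⟨L₀, hL₀, hL₀B⟩ := h
    refine le_csInf ⟨_, L₀, hL₀, hL₀B, rfl⟩ ?_
    rintro _ ⟨L, hL, hLB, rfl⟩
    have hbdd : BddBelow {b | ∃ L : AffineSubspace ℝ (Euc d), IsAffinePlane n L ∧
        ((L : Set (Euc d)) ∩ ball x r).Nonempty ∧ b = betaVal 2 μ x r L} :=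
      ⟨0, by
        rintro _ ⟨L', -, ⟨_, -, hq⟩, rfl⟩
        exact betaVal_nonneg (pos_of_mem_ball hq).le L'⟩
    exact (csInf_le hbdd ⟨L, hL, hLB, rfl⟩).trans (betaVal_le_alphaPVal two_pos hφ μ hL hLB)
  · have hempty : ∀ f : AffineSubspace ℝ (Euc d) → ℝ, {b | ∃ L : AffineSubspace ℝ (Euc d),
        IsAffinePlane n L ∧ ((L : Set (Euc d)) ∩ ball x r).Nonempty ∧ b = f L} = ∅ :=
      fun f => eq_empty_of_forall_notMem fun _ ⟨L, hL, hLB, _⟩ => h ⟨L, hL, hLB⟩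
    rw [betaCoef, alphaP, hempty, hempty]

/-- For a Radon measure `μ` and a ball `B` intersecting `supp μ`,
`β_{μ,2}(B) ≤ α_{μ,2}(B)`. -/
theorem statement4 (n d : ℕ) (hn : 1 ≤ n) (hnd : n ≤ d)
    (φ : Euc d → ℝ) (hφ : IsBumpFn φ)
    (μ : Measure (Euc d)) [IsLocallyFiniteMeasure μ]
    (x : Euc d) (r : ℝ) (hr : 0 < r)
    (hB : (ball x r ∩ measureSupport μ).Nonempty) :
    betaCoef n 2 μ x r ≤ alphaP n 2 φ μ x r :=
  statement4_general n d φ hφ μ x r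
end
end

section
/- Let 1 ≤ n ≤ d be integers. There exists a constant C depending only on n and d with the following property: if μ is a Radon measure on ℝ^d, B is a ball with μ(B) > 0, L is an affine n-plane intersecting 0.9B, and c ≥ 0 satisfies F_B(μ, c H^n|_L) ≤ F_B(μ, c' H^n|_L) for every c' ≥ 0 (i.e. c minimizes F_B(μ, · H^n|_L)), then c ≤ C μ(B)/r(B)^n. -/
/-!
Test the minimality of `c` against the competitor `c' = 0`: for every `φ ∈ Lip₁(B)`,
`c ∫ φ dH^n|_L ≤ |∫ φ dμ - c ∫ φ dH^n|_L| + |∫ φ dμ| ≤ F_B(μ, 0) + |∫ φ dμ| ≤ 6 r μ(B)`,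
since every `ψ ∈ Lip₁(B)` vanishes at distance `2r` from the centre and so is bounded by `3r`.
For `φ` the tent of radius `r/10` at a point of `L ∩ 0.9B`, the left side is at least
`c (r/20)^(n+1) H^n(B₁)`, `B₁` the unit ball of `ℝⁿ`, because `H^n` on an `n`-plane is an additive Haar measure.
-/

open MeasureTheory Metric Set

noncomputable section

/-- `μ` is `n`-rectifiable: `μ ≪ H^n` and `μ`-a.a. of the space is covered by countably
many Lipschitz images of `ℝ^n`. -/
def IsNRectifiable {d : ℕ} (n : ℕ) (μ : Measure (Euc d)) : Prop :=
  μ ≪ μH[(n : ℝ)] ∧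
  ∃ f : ℕ → Euc n → Euc d,
    (∀ i, ∃ K : NNReal, LipschitzWith K (f i)) ∧
    μ (Set.univ \ ⋃ i, Set.range (f i)) = 0

section Tent

variable {X : Type*} [PseudoMetricSpace X]

def tent (p : X) (ρ : ℝ) (y : X) : ℝ := max (ρ - dist y p) 0

variable {p : X} {ρ : ℝ}

lemma lipschitzWith_tent : LipschitzWith 1 (tent p ρ) := by
  show LipschitzWith 1 fun y => max (ρ - dist y p) 0
  simpa using ((LipschitzWith.const ρ).sub (LipschitzWith.dist_left p)).max_const 0

lemma tent_nonneg (y : X) : 0 ≤ tent p ρ y := le_max_right _ _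

lemma tsupport_tent_subset : tsupport (tent p ρ) ⊆ closedBall p ρ := by
  refine closure_minimal (fun y hy => ?_) isClosed_closedBall
  by_contra hyρ
  exact hy (max_eq_right (by linarith [mem_closedBall.not.1 hyρ]))

lemma half_le_tent {y : X} (hy : y ∈ ball p (ρ / 2)) : ρ / 2 ≤ tent p ρ y :=
  le_max_of_le_left (by linarith [mem_ball.1 hy])

lemma mul_measureReal_le_integral_tent [MeasurableSpace X] [OpensMeasurableSpace X]
    {m : Measure X}
    (hint : Integrable (tent p ρ) m) (hfin : m (ball p (ρ / 2)) ≠ ⊤) :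
    ρ / 2 * m.real (ball p (ρ / 2)) ≤ ∫ y, tent p ρ y ∂m :=
  (setIntegral_ge_of_const_le_real measurableSet_ball hfin (fun _ => half_le_tent)
    hint.integrableOn).trans (setIntegral_le_integral hint (.of_forall tent_nonneg))

end Tent

section Lip1

variable {d : ℕ} [Nontrivial (Euc d)] {x : Euc d} {r : ℝ} {ψ : Euc d → ℝ}

lemma abs_le_indicator_of_mem_Lip1 (hψ : ψ ∈ Lip1 (ball x r)) (y : Euc d) :
    |ψ y| ≤ (ball x r).indicator (fun _ => 3 * r) y := by
  obtain ⟨hlip, hsupp⟩ := hψ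
  by_cases hy : y ∈ ball x r
  swap
  · simp [indicator_of_notMem hy, image_eq_zero_of_notMem_tsupport (fun h => hy (hsupp h))]
  have hr : 0 < r := pos_of_mem_ball hy
  obtain ⟨v, hv⟩ := exists_norm_eq (Euc d) (by positivity : 0 ≤ 2 * r)
  have hxz : dist x (x + v) = 2 * r := by simp [hv]
  have hz : ψ (x + v) = 0 :=
    image_eq_zero_of_notMem_tsupport fun h => by
      have := mem_ball'.1 (hsupp h); linarith
  calc |ψ y| = dist (ψ y) (ψ (x + v)) := by rw [hz, Real.dist_eq, sub_zero]
    _ ≤ dist y (x + v) := by simpa using hlip.dist_le_mul y (x + v)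
    _ ≤ dist y x + dist x (x + v) := dist_triangle _ _ _
    _ ≤ (ball x r).indicator (fun _ => 3 * r) y := by
      rw [indicator_of_mem hy, hxz]; linarith [mem_ball.1 hy]

variable {m : Measure (Euc d)}

lemma integrable_of_mem_Lip1 (hψ : ψ ∈ Lip1 (ball x r)) (hm : m (ball x r) ≠ ⊤) :
    Integrable ψ m :=
  ((integrable_indicator_iff measurableSet_ball).2 (integrableOn_const hm)).mono'
    hψ.1.continuous.aestronglyMeasurable (.of_forall (abs_le_indicator_of_mem_Lip1 hψ))

lemma abs_integral_le_of_mem_Lip1 (hψ : ψ ∈ Lip1 (ball x r)) (hm : m (ball x r) ≠ ⊤) :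
    |∫ y, ψ y ∂m| ≤ 3 * r * m.real (ball x r) :=
  calc |∫ y, ψ y ∂m| ≤ ∫ y, |ψ y| ∂m := abs_integral_le_integral_abs
    _ ≤ ∫ y, (ball x r).indicator (fun _ => 3 * r) y ∂m :=
      integral_mono (integrable_of_mem_Lip1 hψ hm).abs
        ((integrable_indicator_iff measurableSet_ball).2 (integrableOn_const hm))
        (abs_le_indicator_of_mem_Lip1 hψ)
    _ = 3 * r * m.real (ball x r) := by
      rw [integral_indicator_const _ measurableSet_ball, smul_eq_mul, mul_comm]

variable {μ ν : Measure (Euc d)}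

lemma abs_sub_integral_le_Fdist (hψ : ψ ∈ Lip1 (ball x r)) (hμ : μ (ball x r) ≠ ⊤)
    (hν : ν (ball x r) ≠ ⊤) : |∫ y, ψ y ∂μ - ∫ y, ψ y ∂ν| ≤ Fdist (ball x r) μ ν := by
  refine le_csSup ⟨3 * r * μ.real (ball x r) + 3 * r * ν.real (ball x r), ?_⟩ ⟨ψ, hψ, rfl⟩
  rintro t ⟨φ, hφ, rfl⟩
  exact (abs_sub _ _).trans
    (add_le_add (abs_integral_le_of_mem_Lip1 hφ hμ) (abs_integral_le_of_mem_Lip1 hφ hν))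

lemma Fdist_zero_right_le (hr : 0 ≤ r) (hμ : μ (ball x r) ≠ ⊤) :
    Fdist (ball x r) μ 0 ≤ 3 * r * μ.real (ball x r) := by
  refine Real.sSup_le ?_ (by positivity)
  rintro t ⟨φ, hφ, rfl⟩
  simpa using abs_integral_le_of_mem_Lip1 hφ hμ

end Lip1

instance isAddHaarMeasure_hausdorffMeasure_euc (n : ℕ) :
    Measure.IsAddHaarMeasure (μH[(n : ℝ)] : Measure (Euc n)) := by
  simpa using isAddHaarMeasure_hausdorffMeasure (E := Euc n)

section Plane

variable {E : Type*} [NormedAddCommGroup E] [InnerProductSpace ℝ E] [FiniteDimensional ℝ E]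
  {n : ℕ} {L : AffineSubspace ℝ E} {p : E}

lemma AffineSubspace.exists_isometry_range_eq_s8 (hL : Module.finrank ℝ L.direction = n)
    (hp : p ∈ L) : ∃ f : Euc n → E, Isometry f ∧ range f = L ∧ f 0 = p := by
  let e : L.direction ≃ₗᵢ[ℝ] Euc n :=
    ((stdOrthonormalBasis ℝ L.direction).reindex (finCongr hL)).repr
  refine ⟨fun v => (e.symm v : E) +ᵥ p, ?_, ?_, by simp⟩
  · exact Isometry.of_dist_eq fun a b => by
      simp only [dist_vadd_cancel_right, ← Subtype.dist_eq, LinearIsometryEquiv.dist_map]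
  · ext y
    refine ⟨?_, fun hy => ⟨e ⟨y -ᵥ p, AffineSubspace.vsub_mem_direction hy hp⟩, by simp⟩⟩
    rintro ⟨v, rfl⟩
    exact AffineSubspace.vadd_mem_of_mem_direction (e.symm v).2 hp

variable [MeasurableSpace E] [BorelSpace E]

lemma AffineSubspace.hausdorffMeasure_inter_ball_s8 (hn : n ≠ 0)
    (hL : Module.finrank ℝ L.direction = n) (hp : p ∈ L) {t : ℝ} (ht : 0 ≤ t) :
    μH[(n : ℝ)] ((L : Set E) ∩ ball p t) =
      ENNReal.ofReal (t ^ n) * μH[(n : ℝ)] (ball (0 : Euc n) 1) := by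
  obtain ⟨f, hf, hfL, hf0⟩ := L.exists_isometry_range_eq_s8 hL hp
  have : NeZero n := ⟨hn⟩
  calc μH[(n : ℝ)] ((L : Set E) ∩ ball p t) = μH[(n : ℝ)] (f '' ball 0 t) := by
        rw [← hf.preimage_ball, image_preimage_eq_range_inter, hfL, hf0]
    _ = μH[(n : ℝ)] (ball (0 : Euc n) t) := hf.hausdorffMeasure_image (.inl (by positivity)) _
    _ = _ := by rw [Measure.addHaar_ball _ _ ht, finrank_euclideanSpace_fin]

lemma AffineSubspace.hausdorffMeasure_inter_ball_ne_top (hn : n ≠ 0)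
    (hL : Module.finrank ℝ L.direction = n) (hp : p ∈ L) (x : E) {t : ℝ} (ht : 0 ≤ t) :
    μH[(n : ℝ)] ((L : Set E) ∩ ball x t) ≠ ⊤ := by
  refine ne_top_of_le_ne_top ?_ <| measure_mono <|
    inter_subset_inter_right _ (ball_subset_ball' (y := p) le_rfl)
  rw [L.hausdorffMeasure_inter_ball_s8 hn hL hp (by positivity)]
  finiteness

end Plane

section Flat

variable {d n : ℕ} {L : AffineSubspace ℝ (Euc d)} {c : ℝ}

lemma flatMeasure_zero : flatMeasure n 0 L = 0 := by
  simp [flatMeasure]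

lemma integral_flatMeasure (hc : 0 ≤ c) (ψ : Euc d → ℝ) :
    ∫ y, ψ y ∂flatMeasure n c L = c * ∫ y, ψ y ∂(μH[(n : ℝ)].restrict (L : Set (Euc d))) := by
  rw [flatMeasure, integral_smul_measure, ENNReal.toReal_ofReal hc, smul_eq_mul]

variable [Nontrivial (Euc d)] {μ : Measure (Euc d)} {x : Euc d} {r : ℝ} {ψ : Euc d → ℝ}

lemma mul_integral_le_of_Fdist_flatMeasure_le (hr : 0 ≤ r) (hc : 0 ≤ c)
    (hμ : μ (ball x r) ≠ ⊤) (hL : μH[(n : ℝ)].restrict (L : Set (Euc d)) (ball x r) ≠ ⊤)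
    (hmin : Fdist (ball x r) μ (flatMeasure n c L) ≤ Fdist (ball x r) μ (flatMeasure n 0 L))
    (hψ : ψ ∈ Lip1 (ball x r)) :
    c * ∫ y, ψ y ∂(μH[(n : ℝ)].restrict (L : Set (Euc d))) ≤ 6 * r * μ.real (ball x r) := by
  have hflat : flatMeasure n c L (ball x r) ≠ ⊤ :=
    ENNReal.mul_ne_top ENNReal.ofReal_ne_top hL
  have hF := (abs_sub_integral_le_Fdist hψ hμ hflat).trans <|
    hmin.trans (flatMeasure_zero (n := n) (L := L) ▸ Fdist_zero_right_le hr hμ)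
  rw [integral_flatMeasure hc] at hF
  linarith [(abs_le.1 hF).1, (abs_le.1 (abs_integral_le_of_mem_Lip1 hψ hμ)).2]

end Flat

/-- If `c` minimizes `c' ↦ F_B(μ, c' H^n|_L)` over `c' ≥ 0`, where `L` is
an affine `n`-plane meeting `0.9B` and `μ(B) > 0`, then `c ≤ C μ(B)/r(B)^n` for some
constant `C = C(n,d)`. -/
theorem statement8 (n d : ℕ) (hn : 1 ≤ n) (hnd : n ≤ d) :
    ∃ C > (0 : ℝ), ∀ (μ : Measure (Euc d)), IsLocallyFiniteMeasure μ →
      ∀ (x : Euc d) (r : ℝ), 0 < r → 0 < μ (ball x r) →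
      ∀ L : AffineSubspace ℝ (Euc d), IsAffinePlane n L →
        ((L : Set (Euc d)) ∩ ball x (0.9 * r)).Nonempty →
      ∀ c : ℝ, 0 ≤ c →
        (∀ c' : ℝ, 0 ≤ c' →
          Fdist (ball x r) μ (flatMeasure n c L) ≤ Fdist (ball x r) μ (flatMeasure n c' L)) →
        c ≤ C * (μ (ball x r)).toReal / r ^ n := by
  have : Nonempty (Fin d) := ⟨⟨0, by omega⟩⟩
  set ω := (μH[(n : ℝ)] (ball (0 : Euc n) 1)).toReal
  have hω : 0 < ω := ENNReal.toReal_pos (measure_ball_pos _ _ one_pos).ne' measure_ball_lt_top.ne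
  refine ⟨6 * 20 ^ (n + 1) / ω, by positivity, ?_⟩
  intro μ _ x r hr _ L hL ⟨p, hpL, hpx⟩ c hc hmin
  set σ := μH[(n : ℝ)].restrict (L : Set (Euc d))
  have hσ (y : Euc d) {t : ℝ} (ht : 0 ≤ t) : σ (ball y t) ≠ ⊤ := by
    rw [Measure.restrict_apply measurableSet_ball, inter_comm]
    exact L.hausdorffMeasure_inter_ball_ne_top (by omega) hL.2 hpL y ht
  have hφ : tent p (r / 10) ∈ Lip1 (ball x r) :=
    ⟨lipschitzWith_tent, tsupport_tent_subset.trans <| closedBall_subset_ball' <| by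
      linarith [mem_ball.1 hpx, dist_comm x p]⟩
  have hupper := mul_integral_le_of_Fdist_flatMeasure_le hr.le hc measure_ball_lt_top.ne
    (hσ x hr.le) (hmin 0 le_rfl) hφ
  have hlower : (r / 20) ^ (n + 1) * ω ≤ ∫ y, tent p (r / 10) y ∂σ := by
    convert mul_measureReal_le_integral_tent (integrable_of_mem_Lip1 hφ (hσ x hr.le))
      (hσ p (by positivity)) using 1
    rw [measureReal_def, Measure.restrict_apply measurableSet_ball, inter_comm,
      L.hausdorffMeasure_inter_ball_s8 (by omega) hL.2 hpL (by positivity), ENNReal.toReal_mul,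
      ENNReal.toReal_ofReal (by positivity)]
    ring
  rw [le_div_iff₀ (by positivity)]
  calc c * r ^ n = c * ((r / 20) ^ (n + 1) * ω) * (20 ^ (n + 1) / (ω * r)) := by
        rw [div_pow]; field_simp; ring
    _ ≤ 6 * r * μ.real (ball x r) * (20 ^ (n + 1) / (ω * r)) := by
        gcongr ?_ * _
        exact (mul_le_mul_of_nonneg_left hlower hc).trans hupper
    _ = 6 * 20 ^ (n + 1) / ω * (μ (ball x r)).toReal := by
        rw [measureReal_def]; field_simp

end
end

section
/- Let 1 ≤ n ≤ d be integers and C₀ ≥ 1. There exist constants ε > 0 and c₁ > 0, depending only on n, d and C₀, with the following property: if μ is a Radon measure on ℝ^d, B is a ball with μ(B) > 0 and μ(3B) ≤ C₀ μ(0.9B), L is an affine n-plane intersecting 0.9B, and c ≥ 0 minimizes F_B(μ, · H^n|_L) and satisfies F_B(μ, c H^n|_L) ≤ ε μ(3B) r(B), then c ≥ c₁ μ(3B)/r(B)^n. -/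
/-!
Test `F_B(μ, c H^n|_L)` against the 1-Lipschitz plateau that equals `r/20` on `0.9B` and vanishes
outside `0.95B`. This gives `(r/20)(μ(0.9B) - c H^n(L ∩ B)) ≤ F_B ≤ ε μ(3B) r`, and with
`ε = 1/(40 C₀)` the doubling condition turns it into `μ(0.9B) ≤ 2 c H^n(L ∩ B)`. Since `L` meets
`0.9B`, `L ∩ B` lies in an `n`-ball of `L` of radius `2r`, so `H^n(L ∩ B) ≤ (2r)^n H^n(B^n)`
with `B^n` the unit ball of `ℝ^n`, and `μ(3B) ≤ C₀ μ(0.9B) ≤ 2^(n+1) C₀ H^n(B^n) c r^n`.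
-/

open MeasureTheory Metric Set

noncomputable section

section FlatMeasure

variable {E : Type*} [NormedAddCommGroup E] [InnerProductSpace ℝ E] [FiniteDimensional ℝ E]
  [MeasurableSpace E] [BorelSpace E]

theorem AffineSubspace.hausdorffMeasure_inter_ball_le {n : ℕ} {L : AffineSubspace ℝ E}
    (hL : Module.finrank ℝ L.direction = n) {p : E} (hp : p ∈ L) {R : ℝ} (hR : 0 < R) :
    μH[(n : ℝ)] ((L : Set E) ∩ ball p R) ≤
      ENNReal.ofReal (R ^ n) * μH[(n : ℝ)] (ball (0 : Euc n) 1) := by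
  let e : Euc n ≃ₗᵢ[ℝ] L.direction :=
    ((stdOrthonormalBasis ℝ L.direction).reindex (finCongr hL)).repr.symm
  let f : Euc n → E := fun v => (e v : E) + p
  have hf : Isometry f :=
    (isometry_add_right p).comp (isometry_subtype_coe.comp e.isometry)
  have hsub : (L : Set E) ∩ ball p R ⊆ f '' ball 0 R := by
    rintro z ⟨hzL, hzR⟩
    refine ⟨e.symm ⟨z - p, L.vsub_mem_direction hzL hp⟩, ?_, by simp [f]⟩
    simpa [dist_eq_norm] using hzR
  calc μH[(n : ℝ)] ((L : Set E) ∩ ball p R) ≤ μH[(n : ℝ)] (f '' ball 0 R) := measure_mono hsub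
    _ = μH[(n : ℝ)] (ball (0 : Euc n) R) := hf.hausdorffMeasure_image (Or.inl n.cast_nonneg) _
    _ = _ := by rw [Measure.addHaar_ball_of_pos _ _ hR, finrank_euclideanSpace_fin]

theorem AffineSubspace.isFiniteMeasureOnCompacts_hausdorffMeasure_restrict {n : ℕ}
    {L : AffineSubspace ℝ E} (hL : Module.finrank ℝ L.direction = n) :
    IsFiniteMeasureOnCompacts (μH[(n : ℝ)].restrict (L : Set E)) := by
  refine ⟨fun K hK => ?_⟩
  rw [Measure.restrict_apply' L.closed_of_finiteDimensional.measurableSet, inter_comm]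
  rcases (L : Set E).eq_empty_or_nonempty with hLe | ⟨p, hp⟩
  · simp [hLe]
  obtain ⟨R, hR, hKR⟩ := hK.isBounded.subset_ball_lt 0 p
  calc μH[(n : ℝ)] ((L : Set E) ∩ K) ≤ μH[(n : ℝ)] ((L : Set E) ∩ ball p R) :=
        measure_mono (inter_subset_inter_right _ hKR)
    _ ≤ ENNReal.ofReal (R ^ n) * μH[(n : ℝ)] (ball (0 : Euc n) 1) :=
        L.hausdorffMeasure_inter_ball_le hL hp hR
    _ < ⊤ := ENNReal.mul_lt_top ENNReal.ofReal_lt_top measure_ball_lt_top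

end FlatMeasure

theorem isLocallyFiniteMeasure_flatMeasure {d n : ℕ} {L : AffineSubspace ℝ (Euc d)}
    (hL : Module.finrank ℝ L.direction = n) (c : ℝ) :
    IsLocallyFiniteMeasure (flatMeasure n c L) := by
  have := L.isFiniteMeasureOnCompacts_hausdorffMeasure_restrict hL
  have := IsFiniteMeasureOnCompacts.smul (μH[(n : ℝ)].restrict (L : Set (Euc d)))
    (ENNReal.ofReal_ne_top (r := c))
  unfold flatMeasure
  infer_instance

theorem flatMeasure_real_ball_le {d n : ℕ} {L : AffineSubspace ℝ (Euc d)}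
    (hL : Module.finrank ℝ L.direction = n) {c : ℝ} (hc : 0 ≤ c) {p : Euc d} (hp : p ∈ L)
    (x : Euc d) {r : ℝ} (hr : 0 < r) :
    (flatMeasure n c L).real (ball x r) ≤
      c * ((r + dist x p) ^ n * (μH[(n : ℝ)] (ball (0 : Euc n) 1)).toReal) := by
  have hR : 0 < r + dist x p := by positivity
  have hsub : ball x r ∩ (L : Set (Euc d)) ⊆ (L : Set (Euc d)) ∩ ball p (r + dist x p) :=
    fun z ⟨hzr, hzL⟩ => ⟨hzL, ball_subset_ball' le_rfl hzr⟩
  have hbound := (measure_mono hsub).trans (L.hausdorffMeasure_inter_ball_le hL hp hR)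
  rw [measureReal_def, flatMeasure, Measure.smul_apply, smul_eq_mul,
    Measure.restrict_apply measurableSet_ball, ENNReal.toReal_mul, ENNReal.toReal_ofReal hc]
  gcongr
  calc (μH[(n : ℝ)] (ball x r ∩ (L : Set (Euc d)))).toReal
      ≤ (ENNReal.ofReal ((r + dist x p) ^ n) * μH[(n : ℝ)] (ball (0 : Euc n) 1)).toReal :=
        ENNReal.toReal_mono (ENNReal.mul_ne_top ENNReal.ofReal_ne_top measure_ball_lt_top.ne)
          hbound
    _ = _ := by rw [ENNReal.toReal_mul, ENNReal.toReal_ofReal (by positivity)]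

section Plateau

variable {X : Type*} [PseudoMetricSpace X]

def plateau (x : X) (a b : ℝ) (y : X) : ℝ := min (max (b - dist y x) 0) (b - a)

variable {x : X} {a b : ℝ}

theorem lipschitzWith_plateau : LipschitzWith 1 (plateau x a b) := by
  have h := (((IsometryEquiv.subLeft b).isometry.lipschitz.comp
    (LipschitzWith.dist_left x)).max_const 0).min_const (b - a)
  rwa [mul_one] at h

theorem plateau_nonneg (hab : a ≤ b) (y : X) : 0 ≤ plateau x a b y :=
  le_min (le_max_right _ _) (sub_nonneg.2 hab)

theorem plateau_le (y : X) : plateau x a b y ≤ b - a := min_le_right _ _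

theorem plateau_of_dist_le {y : X} (hy : dist y x ≤ a) : plateau x a b y = b - a :=
  min_eq_right (le_max_of_le_left (by linarith))

theorem plateau_of_le_dist (hab : a ≤ b) {y : X} (hy : b ≤ dist y x) : plateau x a b y = 0 := by
  rw [plateau, max_eq_right (by linarith), min_eq_left (by linarith)]

theorem tsupport_plateau_subset (hab : a ≤ b) : tsupport (plateau x a b) ⊆ closedBall x b :=
  closure_minimal (fun _ hy => le_of_not_ge fun h => hy (plateau_of_le_dist hab h))
    isClosed_closedBall

end Plateau

section Lip1

variable {d : ℕ}

theorem plateau_mem_Lip1 {x : Euc d} {a b r : ℝ} (hab : a ≤ b) (hbr : b < r) :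
    plateau x a b ∈ Lip1 (ball x r) :=
  ⟨lipschitzWith_plateau, (tsupport_plateau_subset hab).trans (closedBall_subset_ball hbr)⟩

theorem Lip1.apply_eq_zero {B : Set (Euc d)} {ψ : Euc d → ℝ} (hψ : ψ ∈ Lip1 B) {y : Euc d}
    (hy : y ∉ B) : ψ y = 0 :=
  image_eq_zero_of_notMem_tsupport fun h => hy (hψ.2 h)

theorem Lip1.integrable {B : Set (Euc d)} {ψ : Euc d → ℝ} (hψ : ψ ∈ Lip1 B)
    (hB : Bornology.IsBounded B) (μ : Measure (Euc d)) [IsLocallyFiniteMeasure μ] :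
    Integrable ψ μ :=
  hψ.1.continuous.integrable_of_hasCompactSupport
    (isCompact_of_isClosed_isBounded (isClosed_tsupport ψ) (hB.subset hψ.2))

theorem Lip1.integral_eq_setIntegral {B : Set (Euc d)} {ψ : Euc d → ℝ} (hψ : ψ ∈ Lip1 B)
    (μ : Measure (Euc d)) : ∫ y, ψ y ∂μ = ∫ y in B, ψ y ∂μ :=
  (setIntegral_eq_integral_of_forall_compl_eq_zero fun _ hy => Lip1.apply_eq_zero hψ hy).symm

variable [Nontrivial (Euc d)] {x : Euc d} {r : ℝ}

theorem Lip1.abs_le {ψ : Euc d → ℝ} (hψ : ψ ∈ Lip1 (ball x r)) (hr : 0 ≤ r) (y : Euc d) :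
    |ψ y| ≤ 2 * r := by
  by_cases hy : y ∈ ball x r
  · obtain ⟨v, hv⟩ := exists_norm_eq (Euc d) hr
    have hz : x + v ∉ ball x r := by simp [hv]
    have hyz : dist y (x + v) ≤ dist y x + dist x (x + v) := dist_triangle _ _ _
    calc |ψ y| = |ψ y - ψ (x + v)| := by rw [Lip1.apply_eq_zero hψ hz, sub_zero]
      _ ≤ dist y (x + v) := by simpa [Real.dist_eq] using hψ.1.dist_le_mul y (x + v)
      _ ≤ 2 * r := by simp only [dist_self_add_right, hv] at hyz; linarith [mem_ball.1 hy]
  · rw [Lip1.apply_eq_zero hψ hy, abs_zero]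
    positivity

theorem Lip1.abs_integral_le {ψ : Euc d → ℝ} (hψ : ψ ∈ Lip1 (ball x r)) (hr : 0 ≤ r)
    (μ : Measure (Euc d)) [IsLocallyFiniteMeasure μ] :
    |∫ y, ψ y ∂μ| ≤ 2 * r * μ.real (ball x r) := by
  rw [Lip1.integral_eq_setIntegral hψ, ← Real.norm_eq_abs]
  exact norm_setIntegral_le_of_norm_le_const measure_ball_lt_top fun y _ => Lip1.abs_le hψ hr y

theorem bddAbove_Fdist (hr : 0 ≤ r) (μ ν : Measure (Euc d)) [IsLocallyFiniteMeasure μ]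
    [IsLocallyFiniteMeasure ν] :
    BddAbove { t | ∃ φ ∈ Lip1 (ball x r), t = |(∫ y, φ y ∂μ) - ∫ y, φ y ∂ν| } := by
  refine ⟨2 * r * μ.real (ball x r) + 2 * r * ν.real (ball x r), ?_⟩
  rintro t ⟨ψ, hψ, rfl⟩
  exact (abs_sub _ _).trans
    (add_le_add (Lip1.abs_integral_le hψ hr μ) (Lip1.abs_integral_le hψ hr ν))

theorem Lip1.sub_integral_le_Fdist {φ : Euc d → ℝ} (hφ : φ ∈ Lip1 (ball x r)) (hr : 0 ≤ r)
    (μ ν : Measure (Euc d)) [IsLocallyFiniteMeasure μ] [IsLocallyFiniteMeasure ν] :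
    (∫ y, φ y ∂μ) - ∫ y, φ y ∂ν ≤ Fdist (ball x r) μ ν :=
  (le_abs_self _).trans (le_csSup (bddAbove_Fdist hr μ ν) ⟨φ, hφ, rfl⟩)

theorem sub_measureReal_le_Fdist {a : ℝ} (ha₀ : 0 ≤ a) (ha : a < r) (μ ν : Measure (Euc d))
    [IsLocallyFiniteMeasure μ] [IsLocallyFiniteMeasure ν] :
    (r - a) / 2 * (μ.real (ball x a) - ν.real (ball x r)) ≤ Fdist (ball x r) μ ν := by
  set b := (a + r) / 2 with hb
  have hab : a ≤ b := by linarith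
  have hφ : plateau x a b ∈ Lip1 (ball x r) := plateau_mem_Lip1 hab (by linarith)
  have hμ : (b - a) * μ.real (ball x a) ≤ ∫ y, plateau x a b y ∂μ := by
    calc (b - a) * μ.real (ball x a) = ∫ y in ball x a, plateau x a b y ∂μ := by
          rw [setIntegral_congr_fun measurableSet_ball
            fun y hy => plateau_of_dist_le (le_of_lt (mem_ball.1 hy)),
            setIntegral_const, smul_eq_mul, mul_comm]
      _ ≤ ∫ y, plateau x a b y ∂μ :=
          setIntegral_le_integral (Lip1.integrable hφ isBounded_ball μ)
            (ae_of_all _ (plateau_nonneg hab))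
  have hν : ∫ y, plateau x a b y ∂ν ≤ (b - a) * ν.real (ball x r) := by
    calc ∫ y, plateau x a b y ∂ν = ∫ y in ball x r, plateau x a b y ∂ν :=
          Lip1.integral_eq_setIntegral hφ ν
      _ ≤ ∫ _ in ball x r, (b - a) ∂ν :=
          setIntegral_mono_on (Lip1.integrable hφ isBounded_ball ν).integrableOn
            (integrableOn_const measure_ball_lt_top.ne) measurableSet_ball
            fun y _ => plateau_le y
      _ = (b - a) * ν.real (ball x r) := by rw [setIntegral_const, smul_eq_mul, mul_comm]
  have hba : b - a = (r - a) / 2 := by ring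
  have := Lip1.sub_integral_le_Fdist hφ (by linarith) μ ν
  rw [hba] at hμ hν
  linarith

theorem measureReal_ball_le_two_mul_of_Fdist_le {a : ℝ} (ha₀ : 0 ≤ a) (ha : a < r)
    (μ ν : Measure (Euc d)) [IsLocallyFiniteMeasure μ] [IsLocallyFiniteMeasure ν]
    (hF : Fdist (ball x r) μ ν ≤ (r - a) / 4 * μ.real (ball x a)) :
    μ.real (ball x a) ≤ 2 * ν.real (ball x r) := by
  have := sub_measureReal_le_Fdist (x := x) ha₀ ha μ ν
  nlinarith

end Lip1

theorem statement9_general (n d : ℕ) (hn : 1 ≤ n) (C₀ : ℝ) (hC₀ : 1 ≤ C₀) :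
    ∃ ε > (0 : ℝ), ∃ c₁ > (0 : ℝ), ∀ (μ : Measure (Euc d)), IsLocallyFiniteMeasure μ →
      ∀ (x : Euc d) (r : ℝ), 0 < r → 0 < μ (ball x r) →
      μ (ball x (3 * r)) ≤ ENNReal.ofReal C₀ * μ (ball x (0.9 * r)) →
      ∀ L : AffineSubspace ℝ (Euc d), IsAffinePlane n L →
        ((L : Set (Euc d)) ∩ ball x (0.9 * r)).Nonempty →
      ∀ c : ℝ, 0 ≤ c →
        (∀ c' : ℝ, 0 ≤ c' →
          Fdist (ball x r) μ (flatMeasure n c L) ≤ Fdist (ball x r) μ (flatMeasure n c' L)) →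
        Fdist (ball x r) μ (flatMeasure n c L) ≤ ε * (μ (ball x (3 * r))).toReal * r →
        c₁ * (μ (ball x (3 * r))).toReal / r ^ n ≤ c := by
  set V := (μH[(n : ℝ)] (ball (0 : Euc n) 1)).toReal
  have hV : 0 < V := ENNReal.toReal_pos (measure_ball_pos _ _ one_pos).ne' measure_ball_lt_top.ne
  refine ⟨1 / (40 * C₀), by positivity, 1 / (2 ^ (n + 1) * C₀ * V), by positivity, ?_⟩
  intro μ _ x r hr _ hdoub L ⟨_, hL⟩ ⟨p, hpL, hpx⟩ c hc _ hF
  have hnd : n ≤ d := by simpa [hL] using Submodule.finrank_le L.direction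
  have : Nontrivial (Euc d) :=
    Module.nontrivial_of_finrank_pos (R := ℝ) (by rw [finrank_euclideanSpace_fin]; omega)
  have := isLocallyFiniteMeasure_flatMeasure hL c
  have hM : μ.real (ball x (3 * r)) ≤ C₀ * μ.real (ball x (0.9 * r)) := by
    simpa [measureReal_def, ENNReal.toReal_mul, ENNReal.toReal_ofReal (by linarith : 0 ≤ C₀)] using
      ENNReal.toReal_mono (ENNReal.mul_ne_top ENNReal.ofReal_ne_top measure_ball_lt_top.ne) hdoub
  rw [← measureReal_def] at hF ⊢
  have hM₉ := measureReal_ball_le_two_mul_of_Fdist_le (x := x) (by positivity)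
    (by linarith : 0.9 * r < r) μ (flatMeasure n c L) <| hF.trans <| by
      calc 1 / (40 * C₀) * μ.real (ball x (3 * r)) * r
          ≤ 1 / (40 * C₀) * (C₀ * μ.real (ball x (0.9 * r))) * r := by gcongr
        _ = (r - 0.9 * r) / 4 * μ.real (ball x (0.9 * r)) := by field_simp; ring
  have hN := (flatMeasure_real_ball_le hL hc hpL x hr).trans <|
    show _ ≤ c * ((2 * r) ^ n * V) by
      gcongr
      linarith [mem_ball.1 hpx, dist_comm x p]
  rw [div_le_iff₀ (by positivity), one_div_mul_eq_div, div_le_iff₀ (by positivity)]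
  calc μ.real (ball x (3 * r)) ≤ C₀ * (2 * (c * ((2 * r) ^ n * V))) := by
        refine hM.trans (mul_le_mul_of_nonneg_left ?_ (by linarith))
        linarith
    _ = c * r ^ n * (2 ^ (n + 1) * C₀ * V) := by ring

/-- If `μ(3B) ≤ C₀ μ(0.9B)`, `c ≥ 0` minimizes `c' ↦ F_B(μ, c' H^n|_L)`
over `c' ≥ 0` for an affine `n`-plane `L` meeting `0.9B`, and
`F_B(μ, c H^n|_L) ≤ ε μ(3B) r(B)`, then `c ≥ c₁ μ(3B)/r(B)^n`, where `ε, c₁ > 0`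
depend only on `n, d, C₀`. -/
theorem statement9 (n d : ℕ) (hn : 1 ≤ n) (hnd : n ≤ d) (C₀ : ℝ) (hC₀ : 1 ≤ C₀) :
    ∃ ε > (0 : ℝ), ∃ c₁ > (0 : ℝ), ∀ (μ : Measure (Euc d)), IsLocallyFiniteMeasure μ →
      ∀ (x : Euc d) (r : ℝ), 0 < r → 0 < μ (ball x r) →
      μ (ball x (3 * r)) ≤ ENNReal.ofReal C₀ * μ (ball x (0.9 * r)) →
      ∀ L : AffineSubspace ℝ (Euc d), IsAffinePlane n L →
        ((L : Set (Euc d)) ∩ ball x (0.9 * r)).Nonempty →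
      ∀ c : ℝ, 0 ≤ c →
        (∀ c' : ℝ, 0 ≤ c' →
          Fdist (ball x r) μ (flatMeasure n c L) ≤ Fdist (ball x r) μ (flatMeasure n c' L)) →
        Fdist (ball x r) μ (flatMeasure n c L) ≤ ε * (μ (ball x (3 * r))).toReal * r →
        c₁ * (μ (ball x (3 * r))).toReal / r ^ n ≤ c :=
  statement9_general n d hn C₀ hC₀

end
end

section
/- Let μ be a Radon measure on ℝ^d and let α > 1. Then for μ-almost every x ∈ ℝ^d there exists a sequence of radii r_j > 0 with r_j → 0 such that for every j, μ(B(x, α r_j)) ≤ 2 α^d μ(B(x, r_j)). -/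
/-!
By the Besicovitch differentiation theorem, for `μ`-a.e. `x` the ratio
`ν (closedBall x r) / μ (closedBall x r)` of a Haar measure `ν` to `μ` has a finite limit as
`r → 0`, so `ν (closedBall x r) ≤ K μ (closedBall x r)` for small `r`. If doubling with constant
`β α^d` (`β > 1`) failed at every scale below `ε`, iterating would give
`μ (ball x (ε / α^n)) ≤ (β α^d)⁻ⁿ μ (ball x ε)`, while `ν` of these balls only decays like
`α^(-n d)`; the extra factor `βⁿ` contradicts `ν ≤ K μ`.
-/

open MeasureTheory Metric Set Filter Topology Module
open scoped ENNReal

theorem ENNReal.eq_top_of_forall_pow_mul_le {β a b : ℝ≥0∞} (hβ : 1 < β) (ha : a ≠ 0)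
    (h : ∀ n : ℕ, β ^ n * a ≤ b) : b = ∞ := by
  have hlim : Tendsto (fun n : ℕ => β ^ n * a) atTop (𝓝 ∞) := by
    rw [← ENNReal.top_mul ha]
    exact ENNReal.Tendsto.mul_const (ENNReal.tendsto_pow_atTop_nhds_top_iff.2 hβ)
      (Or.inl ENNReal.top_ne_zero)
  exact top_le_iff.1 (le_of_tendsto' hlim h)

theorem pow_mul_le_of_forall_mul_le {f : ℝ → ℝ≥0∞} {C : ℝ≥0∞} {α ε : ℝ} (hα : 1 ≤ α)
    (h : ∀ r ∈ Ioc 0 ε, C * f r ≤ f (α * r)) (hε : 0 < ε) (n : ℕ) :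
    C ^ n * f (ε / α ^ n) ≤ f ε := by
  induction n with
  | zero => simp
  | succ n ih =>
    have hr : ε / α ^ (n + 1) ∈ Ioc 0 ε :=
      ⟨by positivity, div_le_self hε.le (one_le_pow₀ hα)⟩
    have hscale : α * (ε / α ^ (n + 1)) = ε / α ^ n := by
      field_simp
      ring
    calc C ^ (n + 1) * f (ε / α ^ (n + 1)) = C ^ n * (C * f (ε / α ^ (n + 1))) := by ring
      _ ≤ C ^ n * f (ε / α ^ n) := by grw [h _ hr, hscale]
      _ ≤ f ε := ih

section FiniteDimensional

variable {E : Type*} [NormedAddCommGroup E] [NormedSpace ℝ E] [FiniteDimensional ℝ E]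
  [MeasurableSpace E] [BorelSpace E] (ν μ : Measure E) [ν.IsAddHaarMeasure]
  [IsLocallyFiniteMeasure μ]

theorem ae_eventually_addHaar_closedBall_le_mul :
    ∀ᵐ x ∂μ, ∃ K < ∞, ∀ᶠ r in 𝓝[>] 0, ν (closedBall x r) ≤ K * μ (closedBall x r) := by
  filter_upwards [Besicovitch.ae_tendsto_rnDeriv ν μ, Measure.rnDeriv_lt_top ν μ]
    with x hlim hfin
  have hK : ν.rnDeriv μ x + 1 < ∞ := ENNReal.add_lt_top.2 ⟨hfin, ENNReal.one_lt_top⟩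
  refine ⟨ν.rnDeriv μ x + 1, hK, ?_⟩
  filter_upwards [hlim (Iio_mem_nhds (ENNReal.lt_add_right hfin.ne one_ne_zero))] with r hr
  exact (ENNReal.div_le_iff_le_mul (Or.inr hK.ne) (Or.inr (by simp))).1 hr.le

theorem frequently_measure_ball_le_of_eventually_addHaar_le {x : E} {K : ℝ≥0∞} (hK : K < ∞)
    (hx : ∀ᶠ r in 𝓝[>] 0, ν (closedBall x r) ≤ K * μ (closedBall x r))
    {α β : ℝ} (hα : 1 < α) (hβ : 1 < β) :
    ∃ᶠ r in 𝓝[>] 0,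
      μ (ball x (α * r)) ≤ ENNReal.ofReal (β * α ^ finrank ℝ E) * μ (ball x r) := by
  set C := ENNReal.ofReal (β * α ^ finrank ℝ E)
  by_contra hnot
  rw [not_frequently] at hnot
  obtain ⟨ε, hε : 0 < ε, hεK⟩ := mem_nhdsGT_iff_exists_Ioc_subset.1 (hx.and hnot)
  have hdecay (n : ℕ) : C ^ n * μ (ball x (ε / α ^ n)) ≤ μ (ball x ε) :=
    pow_mul_le_of_forall_mul_le (f := fun r => μ (ball x r)) hα.le
      (fun r hr => (not_le.1 (hεK hr).2).le) hε n
  have hbound (n : ℕ) :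
      ENNReal.ofReal β ^ n * (ENNReal.ofReal ((ε / α) ^ finrank ℝ E) * ν (ball 0 1)) ≤
        K * μ (ball x ε) := by
    set t := ε / α ^ (n + 1) with ht_def
    have ht : t ∈ Ioc 0 ε := ⟨by positivity, div_le_self hε.le (one_le_pow₀ hα.le)⟩
    have hscale : C ^ n * ENNReal.ofReal (t ^ finrank ℝ E) =
        ENNReal.ofReal β ^ n * ENNReal.ofReal ((ε / α) ^ finrank ℝ E) := by
      rw [← ENNReal.ofReal_pow (by positivity), ← ENNReal.ofReal_pow (by positivity),
        ← ENNReal.ofReal_mul (by positivity), ← ENNReal.ofReal_mul (by positivity)]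
      congr 1
      rw [ht_def, pow_succ', ← div_div, div_pow, mul_pow, ← pow_mul, ← pow_mul, mul_comm n]
      field_simp
    have hsub : closedBall x t ⊆ ball x (ε / α ^ n) := closedBall_subset_ball <|
      div_lt_div_of_pos_left hε (by positivity) (pow_lt_pow_right₀ hα n.lt_succ_self)
    calc ENNReal.ofReal β ^ n * (ENNReal.ofReal ((ε / α) ^ finrank ℝ E) * ν (ball 0 1))
        = C ^ n * ν (closedBall x t) := by
          rw [Measure.addHaar_closedBall ν x ht.1.le, ← mul_assoc (C ^ n), hscale, mul_assoc]
      _ ≤ C ^ n * (K * μ (ball x (ε / α ^ n))) := by grw [(hεK ht).1, measure_mono hsub]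
      _ = K * (C ^ n * μ (ball x (ε / α ^ n))) := by ring
      _ ≤ K * μ (ball x ε) := by grw [hdecay n]
  have hpos : ENNReal.ofReal ((ε / α) ^ finrank ℝ E) * ν (ball 0 1) ≠ 0 :=
    mul_ne_zero (by simp; positivity) (measure_ball_pos ν 0 one_pos).ne'
  exact ENNReal.mul_ne_top hK.ne measure_ball_lt_top.ne <|
    ENNReal.eq_top_of_forall_pow_mul_le (by simpa using hβ) hpos hbound

end FiniteDimensional

/-- For a Radon measure `μ` on `ℝ^d` and `α > 1`, for `μ`-a.e. `x` there
is a sequence of radii `r_j → 0` with `μ(B(x, α r_j)) ≤ 2 α^d μ(B(x, r_j))` for all `j`. -/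
theorem statement12 (d : ℕ) (μ : Measure (EuclideanSpace ℝ (Fin d)))
    [IsLocallyFiniteMeasure μ] (α : ℝ) (hα : 1 < α) :
    ∀ᵐ x ∂μ, ∃ r : ℕ → ℝ, (∀ j, 0 < r j) ∧
      Filter.Tendsto r Filter.atTop (nhds 0) ∧
      ∀ j, μ (ball x (α * r j)) ≤ ENNReal.ofReal (2 * α ^ d) * μ (ball x (r j)) := by
  filter_upwards [ae_eventually_addHaar_closedBall_le_mul volume μ] with x ⟨K, hK, hx⟩
  have hfreq :=
    frequently_measure_ball_le_of_eventually_addHaar_le volume μ hK hx hα one_lt_two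
  rw [finrank_euclideanSpace_fin, frequently_nhdsWithin_iff] at hfreq
  obtain ⟨r, hr0, hr⟩ := exists_seq_forall_of_frequently hfreq
  exact ⟨r, fun j => (hr j).2, hr0, fun j => (hr j).1⟩
end

section
/- Let L₁, L₂ be affine n-planes in ℝ^d and let B be a ball. Suppose x_α ∈ L₁ ∩ B̄ satisfies dist(x_α, L₂) = inf{ dist(x, L₂) : x ∈ L₁ ∩ B }, and let x_β ∈ L₂ be the nearest point of L₂ to x_α, i.e. |x_α − x_β| = dist(x_α, L₂). Denote by Π^⊥ the orthogonal projection onto the orthogonal complement of the direction space of L₂. Then for every x ∈ L₁ ∩ B: dist(x, L₂) = |Π^⊥(x − x_α) − (x_β − x_α)|, and moreover dist(x, L₂) ≤ |x_α − x_β| + |Π^⊥(x − x_α)| ≤ 3 dist(x, L₂). -/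
open MeasureTheory Metric Set

noncomputable section

/-- The orthogonal projection onto the orthogonal complement of the direction space of
an affine subspace `L`, viewed as a map `ℝ^d → ℝ^d`. -/
noncomputable def perpProj {d : ℕ} (L : AffineSubspace ℝ (Euc d)) (x : Euc d) : Euc d :=
  (Submodule.orthogonalProjection L.directionᗮ x : Euc d)

/-!
Since `x_β` is the nearest point of `L₂` to `x_α`, the vector `x_α - x_β` is orthogonal to `L₂`,
so `Π^⊥` fixes it and `dist(x, L₂) = |Π^⊥(x - x_β)| = |Π^⊥(x - x_α) - (x_β - x_α)|`. Both bounds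
then follow from the triangle inequality and `|x_α - x_β| ≤ dist(x, L₂)`, which is the minimality
of `x_α`.
-/

section

variable {E : Type*} [NormedAddCommGroup E] [InnerProductSpace ℝ E]
  {L : AffineSubspace ℝ E} [L.direction.HasOrthogonalProjection]

theorem AffineSubspace.infDist_eq_norm_starProjection_orthogonal {x y : E} (hy : y ∈ L) :
    infDist x L = ‖L.directionᗮ.starProjection (x - y)‖ := by
  have : Nonempty L := ⟨⟨y, hy⟩⟩
  rw [← EuclideanGeometry.dist_orthogonalProjection_eq_infDist,
    EuclideanGeometry.orthogonalProjection_apply_mem L hy, Submodule.starProjection_orthogonal_val,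
    dist_eq_norm, vsub_eq_sub, vadd_eq_add, Submodule.coe_orthogonalProjectionOnto_apply,
    sub_add_eq_sub_sub, sub_right_comm]

theorem AffineSubspace.sub_mem_direction_orthogonal_of_norm_sub_eq_infDist {x y : E} (hy : y ∈ L)
    (h : ‖x - y‖ = infDist x L) : x - y ∈ L.directionᗮ := by
  have : Nonempty L := ⟨⟨y, hy⟩⟩
  rw [← EuclideanGeometry.dist_orthogonalProjection_eq_infDist, ← dist_eq_norm, eq_comm,
    EuclideanGeometry.dist_orthogonalProjection_eq_dist_iff_eq_of_mem hy] at h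
  simpa [h] using EuclideanGeometry.vsub_orthogonalProjection_mem_direction_orthogonal L x

end

theorem perpProj_eq_starProjection {d : ℕ} (L : AffineSubspace ℝ (Euc d)) (v : Euc d) :
    perpProj L v = L.directionᗮ.starProjection v :=
  rfl

theorem infDist_eq_norm_perpProj_sub_sub {d : ℕ} {L : AffineSubspace ℝ (Euc d)} {a b : Euc d}
    (hb : b ∈ L) (hab : a - b ∈ L.directionᗮ) (x : Euc d) :
    infDist x L = ‖perpProj L (x - a) - (b - a)‖ := by
  have hba : b - a ∈ L.directionᗮ := by simpa using L.directionᗮ.neg_mem hab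
  rw [L.infDist_eq_norm_starProjection_orthogonal hb, perpProj_eq_starProjection,
    ← Submodule.starProjection_eq_self_iff.2 hba, ← map_sub, sub_sub_sub_cancel_right]

theorem statement16_general (d : ℕ)
    (L₁ L₂ : AffineSubspace ℝ (Euc d))
    (z : Euc d) (ρ : ℝ)
    (xα : Euc d)
    (hmin : Metric.infDist xα (L₂ : Set (Euc d)) =
      sInf { t | ∃ x ∈ (L₁ : Set (Euc d)) ∩ ball z ρ, t = Metric.infDist x (L₂ : Set (Euc d)) })
    (xβ : Euc d) (hxβ : xβ ∈ (L₂ : Set (Euc d)))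
    (hnear : ‖xα - xβ‖ = Metric.infDist xα (L₂ : Set (Euc d))) :
    ∀ x ∈ (L₁ : Set (Euc d)) ∩ ball z ρ,
      Metric.infDist x (L₂ : Set (Euc d)) =
        ‖perpProj L₂ (x - xα) - (xβ - xα)‖ ∧
      Metric.infDist x (L₂ : Set (Euc d)) ≤ ‖xα - xβ‖ + ‖perpProj L₂ (x - xα)‖ ∧
      ‖xα - xβ‖ + ‖perpProj L₂ (x - xα)‖ ≤ 3 * Metric.infDist x (L₂ : Set (Euc d)) := by
  intro x hx
  have hperp : xα - xβ ∈ L₂.directionᗮ :=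
    L₂.sub_mem_direction_orthogonal_of_norm_sub_eq_infDist hxβ hnear
  have hdist := infDist_eq_norm_perpProj_sub_sub hxβ hperp x
  have hβ : ‖xα - xβ‖ ≤ infDist x L₂ :=
    hnear ▸ hmin ▸ csInf_le ⟨0, by rintro _ ⟨y, -, rfl⟩; exact infDist_nonneg⟩ ⟨x, hx, rfl⟩
  rw [norm_sub_rev xα] at hβ ⊢
  refine ⟨hdist, ?_, ?_⟩
  · rw [hdist, add_comm]
    exact norm_sub_le _ _
  · have := norm_le_insert' (perpProj L₂ (x - xα)) (xβ - xα)
    rw [← hdist] at this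
    linarith

/-- Let `L₁, L₂` be affine `n`-planes, `B` a ball, `x_α ∈ L₁ ∩ B̄`
realizing `inf { dist(x, L₂) : x ∈ L₁ ∩ B }`, and `x_β ∈ L₂` a nearest point of `L₂` to
`x_α`. Then for every `x ∈ L₁ ∩ B`:
`dist(x, L₂) = |Π^⊥(x − x_α) − (x_β − x_α)|` and
`dist(x, L₂) ≤ |x_α − x_β| + |Π^⊥(x − x_α)| ≤ 3 dist(x, L₂)`. -/
theorem statement16 (n d : ℕ) (hn : 1 ≤ n) (hnd : n ≤ d)
    (L₁ L₂ : AffineSubspace ℝ (Euc d))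
    (h₁ : IsAffinePlane n L₁) (h₂ : IsAffinePlane n L₂)
    (z : Euc d) (ρ : ℝ) (hρ : 0 < ρ)
    (xα : Euc d) (hxα : xα ∈ (L₁ : Set (Euc d)) ∩ closedBall z ρ)
    (hmin : Metric.infDist xα (L₂ : Set (Euc d)) =
      sInf { t | ∃ x ∈ (L₁ : Set (Euc d)) ∩ ball z ρ, t = Metric.infDist x (L₂ : Set (Euc d)) })
    (xβ : Euc d) (hxβ : xβ ∈ (L₂ : Set (Euc d)))
    (hnear : ‖xα - xβ‖ = Metric.infDist xα (L₂ : Set (Euc d))) :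
    ∀ x ∈ (L₁ : Set (Euc d)) ∩ ball z ρ,
      Metric.infDist x (L₂ : Set (Euc d)) =
        ‖perpProj L₂ (x - xα) - (xβ - xα)‖ ∧
      Metric.infDist x (L₂ : Set (Euc d)) ≤ ‖xα - xβ‖ + ‖perpProj L₂ (x - xα)‖ ∧
      ‖xα - xβ‖ + ‖perpProj L₂ (x - xα)‖ ≤ 3 * Metric.infDist x (L₂ : Set (Euc d)) :=
  statement16_general d L₁ L₂ z ρ xα hmin xβ hxβ hnear

end
end
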